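/- For all s₁, s₂ ≥ 0 and all u ≥ 1/2, one has ∫_{s₂}^∞ ∫_{s₁}^∞ e^{x}·Ai(x+y+u²)²·e^{-2(x+y)u − 4u³/3} dy dx ≤ (1/(8u³))·e^{-8u³/3}·e^{-4(s₁+s₂)u + s₂}; i.e., the Hilbert–Schmidt norm of the weighted kernel K̄_{2,1}(x,y) = e^{x/2}·1_{x>s₂}1_{y>s₁}·Ai(x+y+u²)e^{-(x+y)u − 2u³/3} is at most (8u³)^{-1/2}·e^{-4u³/3}·e^{-2(s₁+s₂)u + s₂/2}. -/

import Mathlib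

/-!
Shifting the contour of the Airy integral from `ℝ` to `ℝ + iu` turns it into a Gaussian
integral, so `Ai(x)² ≤ e^{2u³/3 - 2xu} / (4πu)` for every `u > 0`. At the point `x + y + u²`
this dominates the integrand by `e^{-8u³/3} / (4πu) · e^{(1-4u)x} e^{-4uy}`, whose integral over
`(s₂, ∞) × (s₁, ∞)` is explicit; for `u ≥ 1/2` its constant `1 / (16πu²(4u-1))` is at most
`1 / (8u³)`. The squared Hilbert–Schmidt norm is the same double integral, so the second
bound is the square root of the first.
-/

open MeasureTheory Real Filter

/-- The Airy function, defined for `x ∈ ℝ` by the convergent improper integral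
`Ai(x) = (1/π) lim_{T→∞} ∫₀ᵀ cos(t³/3 + x t) dt`. -/
noncomputable def Ai (x : ℝ) : ℝ :=
  limUnder Filter.atTop
    (fun T : ℝ => (1 / Real.pi) * ∫ t in (0 : ℝ)..T, Real.cos (t ^ 3 / 3 + x * t))

/-- The Hilbert–Schmidt norm `(∫∫ K(x,y)² dx dy)^{1/2}` of a kernel on `ℝ²`. -/
noncomputable def HSnorm (K : ℝ → ℝ → ℝ) : ℝ :=
  Real.sqrt (∫⁻ p : ℝ × ℝ, ENNReal.ofReal (K p.1 p.2 ^ 2)).toReal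

open Complex in
noncomputable def airyIntegrand (x : ℝ) (z : ℂ) : ℂ := cexp (I * (z ^ 3 / 3 + x * z))

lemma integral_exp_mul {c : ℝ} (hc : c ≠ 0) (a b : ℝ) :
    ∫ y in a..b, Real.exp (c * y) = (Real.exp (c * b) - Real.exp (c * a)) / c := by
  simp [intervalIntegral.integral_comp_mul_left (fun y => Real.exp y) hc, integral_exp]
  ring

namespace airyIntegrand

open Complex Topology

lemma differentiable (x : ℝ) : Differentiable ℂ (airyIntegrand x) := by
  unfold airyIntegrand; fun_prop

lemma norm_add_mul_I (x a b : ℝ) :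
    ‖airyIntegrand x (a + b * I)‖ = Real.exp (-a ^ 2 * b + b ^ 3 / 3 - x * b) := by
  rw [airyIntegrand, norm_exp]
  congr 1
  simp only [pow_succ, pow_zero, one_mul, mul_re, I_re, add_re, div_ofNat_re, ofReal_re, mul_zero,
    ofReal_im, I_im, mul_one, sub_self, add_zero, add_im, mul_im, zero_add, zero_mul, sub_zero,
    div_ofNat_im, zero_sub, neg_add_rev, neg_mul]
  ring

lemma re_ofReal (x t : ℝ) : (airyIntegrand x t).re = Real.cos (t ^ 3 / 3 + x * t) := by
  rw [airyIntegrand, ← exp_ofReal_mul_I_re (t ^ 3 / 3 + x * t)]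
  push_cast
  ring_nf

lemma integrable_add_mul_I (x : ℝ) {u : ℝ} (hu : 0 < u) :
    Integrable (fun t : ℝ => airyIntegrand x (t + u * I)) := by
  refine ((integrable_exp_neg_mul_sq hu).const_mul (Real.exp (u ^ 3 / 3 - x * u))).mono'
    ((differentiable x).continuous.comp (by fun_prop)).aestronglyMeasurable
    (ae_of_all _ fun t => ?_)
  rw [norm_add_mul_I, ← Real.exp_add]
  exact (congrArg Real.exp (by ring)).le

lemma norm_intervalIntegral_vertical_le (x : ℝ) {u a : ℝ} (hu : 0 ≤ u) (ha : a ≠ 0) :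
    ‖∫ y in (0 : ℝ)..u, airyIntegrand x (a + y * I)‖ ≤
      Real.exp (u ^ 3 / 3 + |x| * u) / a ^ 2 := by
  calc ‖∫ y in (0 : ℝ)..u, airyIntegrand x (a + y * I)‖
      ≤ ∫ y in (0 : ℝ)..u, Real.exp (u ^ 3 / 3 + |x| * u) * Real.exp (-a ^ 2 * y) := by
        refine intervalIntegral.norm_integral_le_of_norm_le hu (ae_of_all _ fun y hy => ?_)
          (Continuous.intervalIntegrable (by fun_prop) _ _)
        rw [norm_add_mul_I, ← Real.exp_add, Real.exp_le_exp]
        have hy3 : y ^ 3 ≤ u ^ 3 := pow_le_pow_left₀ hy.1.le hy.2 3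
        nlinarith [neg_abs_le x, abs_nonneg x, hy.1, hy.2]
    _ = Real.exp (u ^ 3 / 3 + |x| * u) * ((1 - Real.exp (-a ^ 2 * u)) / a ^ 2) := by
        rw [intervalIntegral.integral_const_mul, integral_exp_mul (by simpa using ha), mul_zero,
          Real.exp_zero]
        ring
    _ ≤ Real.exp (u ^ 3 / 3 + |x| * u) / a ^ 2 := by
        rw [mul_div_assoc']
        gcongr
        exact mul_le_of_le_one_right (Real.exp_nonneg _) (by linarith [Real.exp_pos (-a ^ 2 * u)])

lemma tendsto_intervalIntegral_vertical (x : ℝ) {u : ℝ} (hu : 0 ≤ u) {a : ℝ → ℝ}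
    (ha : Tendsto (fun T => a T ^ 2) atTop atTop) :
    Tendsto (fun T => ∫ y in (0 : ℝ)..u, airyIntegrand x (a T + y * I)) atTop (𝓝 0) := by
  refine squeeze_zero_norm' ?_
    ((tendsto_const_nhds (x := Real.exp (u ^ 3 / 3 + |x| * u))).div_atTop ha)
  filter_upwards [ha.eventually_ge_atTop 1] with T hT
  exact norm_intervalIntegral_vertical_le x hu fun h => by norm_num [h] at hT

/-- Cauchy's theorem on the rectangle `[-T, T] × [0, u]` moves the real line to `ℝ + iu`, where
the integrand is a Gaussian. -/
lemma tendsto_intervalIntegral (x : ℝ) {u : ℝ} (hu : 0 < u) :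
    Tendsto (fun T : ℝ => ∫ t in -T..T, airyIntegrand x t) atTop
      (𝓝 (∫ t : ℝ, airyIntegrand x (t + u * I))) := by
  have hrect : ∀ T : ℝ, ∫ t in -T..T, airyIntegrand x t =
      (∫ t in -T..T, airyIntegrand x (t + u * I))
        - I • (∫ y in (0 : ℝ)..u, airyIntegrand x (T + y * I))
        + I • (∫ y in (0 : ℝ)..u, airyIntegrand x (-T + y * I)) := fun T => by
    have h := integral_boundary_rect_eq_zero_of_differentiableOn (airyIntegrand x)
      ⟨-T, 0⟩ ⟨T, u⟩ (differentiable x).differentiableOn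
    simp only [ofReal_zero, zero_mul, add_zero] at h
    push_cast at h ⊢
    linear_combination h
  have hsq : Tendsto (fun T : ℝ => T ^ 2) atTop atTop := tendsto_pow_atTop two_ne_zero
  have h := ((intervalIntegral_tendsto_integral (integrable_add_mul_I x hu)
      tendsto_neg_atTop_atBot tendsto_id).sub
    ((tendsto_intervalIntegral_vertical x hu.le hsq).const_smul I)).add
    ((tendsto_intervalIntegral_vertical x hu.le (a := fun T => -T) (by simp [hsq])).const_smul I)
  simp only [smul_zero, sub_zero, add_zero, id, ofReal_neg] at h
  exact h.congr fun T => (hrect T).symm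

lemma re_intervalIntegral (x T : ℝ) :
    (∫ t in -T..T, airyIntegrand x t).re = 2 * ∫ t in (0 : ℝ)..T, Real.cos (t ^ 3 / 3 + x * t) := by
  have hcont : Continuous fun t : ℝ => Real.cos (t ^ 3 / 3 + x * t) := by fun_prop
  have heven : ∫ t in -T..0, Real.cos (t ^ 3 / 3 + x * t) =
      ∫ t in (0 : ℝ)..T, Real.cos (t ^ 3 / 3 + x * t) := by
    have h := intervalIntegral.integral_comp_neg (a := 0) (b := T)
      (fun t => Real.cos (t ^ 3 / 3 + x * t))
    rw [neg_zero] at h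
    rw [← h]
    congr 1 with t
    rw [← Real.cos_neg]
    ring_nf
  have hint : IntervalIntegrable (fun t : ℝ => airyIntegrand x t) volume (-T) T :=
    ((differentiable x).continuous.comp continuous_ofReal).intervalIntegrable _ _
  rw [← RCLike.re_to_complex, ← intervalIntegral.intervalIntegral_re hint]
  simp only [RCLike.re_to_complex, re_ofReal]
  rw [← intervalIntegral.integral_add_adjacent_intervals (b := 0) (hcont.intervalIntegrable _ _)
    (hcont.intervalIntegrable _ _), heven]
  ring

end airyIntegrand

open Complex in
lemma Ai_eq_re_integral (x : ℝ) {u : ℝ} (hu : 0 < u) :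
    Ai x = (∫ t : ℝ, airyIntegrand x (t + u * I)).re / (2 * π) := by
  refine Tendsto.limUnder_eq ?_
  have h := ((continuous_re.tendsto _).comp (airyIntegrand.tendsto_intervalIntegral x hu)).div_const
    (2 * π)
  refine h.congr fun T => ?_
  simp only [Function.comp_apply, airyIntegrand.re_intervalIntegral]
  field_simp

open Complex in
lemma Ai_sq_le (x : ℝ) {u : ℝ} (hu : 0 < u) :
    Ai x ^ 2 ≤ Real.exp (2 * (u ^ 3 / 3 - x * u)) / (4 * π * u) := by
  set L := ∫ t : ℝ, airyIntegrand x (t + u * I)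
  have hL : ‖L‖ ≤ √(π / u) * Real.exp (u ^ 3 / 3 - x * u) :=
    calc ‖L‖ ≤ ∫ t : ℝ, Real.exp (u ^ 3 / 3 - x * u) * Real.exp (-u * t ^ 2) := by
          refine norm_integral_le_of_norm_le ((integrable_exp_neg_mul_sq hu).const_mul _)
            (ae_of_all _ fun t => ?_)
          rw [airyIntegrand.norm_add_mul_I, ← Real.exp_add]
          exact (congrArg Real.exp (by ring)).le
      _ = √(π / u) * Real.exp (u ^ 3 / 3 - x * u) := by
          rw [integral_const_mul, integral_gaussian, mul_comm]
  rw [Ai_eq_re_integral x hu]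
  calc (L.re / (2 * π)) ^ 2 ≤ (‖L‖ / (2 * π)) ^ 2 := by
        rw [div_pow, div_pow, ← sq_abs L.re]
        gcongr
        exact abs_re_le_norm L
    _ ≤ (√(π / u) * Real.exp (u ^ 3 / 3 - x * u) / (2 * π)) ^ 2 := by gcongr
    _ = Real.exp (2 * (u ^ 3 / 3 - x * u)) / (4 * π * u) := by
        rw [div_pow, mul_pow, Real.sq_sqrt (by positivity), ← Real.exp_nat_mul]
        field_simp
        ring_nf

lemma lintegral_exp_mul_Ioi {a : ℝ} (ha : a < 0) (c : ℝ) :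
    ∫⁻ x in Set.Ioi c, ENNReal.ofReal (Real.exp (a * x)) =
      ENNReal.ofReal (-Real.exp (a * c) / a) := by
  rw [← ofReal_integral_eq_lintegral_ofReal (integrableOn_exp_mul_Ioi ha c)
    (ae_of_all _ fun _ => (Real.exp_pos _).le), integral_exp_mul_Ioi ha]

lemma lintegral_Ioi_lintegral_Ioi_exp_mul_exp_mul {a b : ℝ} (ha : a < 0) (hb : b < 0) (c d : ℝ) :
    ∫⁻ x in Set.Ioi c, ∫⁻ y in Set.Ioi d,
        ENNReal.ofReal (Real.exp (a * x) * Real.exp (b * y)) =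
      ENNReal.ofReal (Real.exp (a * c) * Real.exp (b * d) / (a * b)) := by
  simp_rw [ENNReal.ofReal_mul (Real.exp_pos _).le, lintegral_const_mul' _ _ ENNReal.ofReal_ne_top]
  rw [lintegral_exp_mul_Ioi hb, lintegral_mul_const' _ _ ENNReal.ofReal_ne_top,
    lintegral_exp_mul_Ioi ha,
    ← ENNReal.ofReal_mul (div_nonneg_of_nonpos (neg_nonpos.2 (Real.exp_pos _).le) ha.le)]
  congr 1
  field_simp

lemma exp_mul_Ai_sq_mul_exp_le (x y : ℝ) {u : ℝ} (hu : 0 < u) :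
    Real.exp x * Ai (x + y + u ^ 2) ^ 2 * Real.exp (-2 * (x + y) * u - 4 * u ^ 3 / 3) ≤
      Real.exp (-8 * u ^ 3 / 3) / (4 * π * u) *
        (Real.exp ((1 - 4 * u) * x) * Real.exp (-4 * u * y)) := by
  calc Real.exp x * Ai (x + y + u ^ 2) ^ 2 * Real.exp (-2 * (x + y) * u - 4 * u ^ 3 / 3)
      ≤ Real.exp x * (Real.exp (2 * (u ^ 3 / 3 - (x + y + u ^ 2) * u)) / (4 * π * u)) *
          Real.exp (-2 * (x + y) * u - 4 * u ^ 3 / 3) := by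
        gcongr
        exact Ai_sq_le _ hu
    _ = _ := by
        simp only [mul_div_assoc', div_mul_eq_mul_div, ← Real.exp_add]
        ring_nf

lemma lintegral_exp_mul_Ai_sq_mul_exp_le (s₁ s₂ : ℝ) {u : ℝ} (hu : 1 / 2 ≤ u) :
    (∫⁻ x in Set.Ioi s₂, ∫⁻ y in Set.Ioi s₁,
        ENNReal.ofReal (Real.exp x * Ai (x + y + u ^ 2) ^ 2 *
          Real.exp (-2 * (x + y) * u - 4 * u ^ 3 / 3))) ≤
      ENNReal.ofReal (1 / (8 * u ^ 3) * Real.exp (-8 * u ^ 3 / 3) *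
        Real.exp (-4 * (s₁ + s₂) * u + s₂)) := by
  have hu0 : 0 < u := by linarith
  have hexp : Real.exp ((1 - 4 * u) * s₂) * Real.exp (-4 * u * s₁) =
      Real.exp (-4 * (s₁ + s₂) * u + s₂) := by
    rw [← Real.exp_add]; ring_nf
  have hconst : 1 / (4 * π * u) * (1 / ((1 - 4 * u) * (-4 * u))) ≤ 1 / (8 * u ^ 3) := by
    have h : u ≤ 2 * π * (4 * u - 1) := by nlinarith [pi_gt_three]
    rw [one_div_mul_one_div]
    exact one_div_le_one_div_of_le (by positivity) (by nlinarith [sq_nonneg u])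
  calc _ ≤ ∫⁻ x in Set.Ioi s₂, ∫⁻ y in Set.Ioi s₁,
        ENNReal.ofReal (Real.exp (-8 * u ^ 3 / 3) / (4 * π * u)) *
          ENNReal.ofReal (Real.exp ((1 - 4 * u) * x) * Real.exp (-4 * u * y)) := by
        gcongr with x y
        rw [← ENNReal.ofReal_mul (by positivity)]
        exact ENNReal.ofReal_le_ofReal (exp_mul_Ai_sq_mul_exp_le x y hu0)
    _ = ENNReal.ofReal (Real.exp (-8 * u ^ 3 / 3) / (4 * π * u) *
          (Real.exp ((1 - 4 * u) * s₂) * Real.exp (-4 * u * s₁) / ((1 - 4 * u) * (-4 * u)))) := by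
        simp_rw [lintegral_const_mul' _ _ ENNReal.ofReal_ne_top]
        rw [lintegral_Ioi_lintegral_Ioi_exp_mul_exp_mul (by linarith) (by linarith),
          ← ENNReal.ofReal_mul (by positivity)]
    _ ≤ _ := by
        refine ENNReal.ofReal_le_ofReal ?_
        rw [hexp]
        calc _ = 1 / (4 * π * u) * (1 / ((1 - 4 * u) * (-4 * u))) *
              (Real.exp (-8 * u ^ 3 / 3) * Real.exp (-4 * (s₁ + s₂) * u + s₂)) := by ring
          _ ≤ 1 / (8 * u ^ 3) *
              (Real.exp (-8 * u ^ 3 / 3) * Real.exp (-4 * (s₁ + s₂) * u + s₂)) := by gcongr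
          _ = _ := by ring

/-- `lintegral_prod_le` needs no measurability of `K`; none is available for `Ai`, which is
defined through `limUnder`. -/
lemma HSnorm_le_sqrt_of_lintegral_le {K : ℝ → ℝ → ℝ} {B : ℝ} (hB : 0 ≤ B)
    (h : ∫⁻ x, ∫⁻ y, ENNReal.ofReal (K x y ^ 2) ≤ ENNReal.ofReal B) : HSnorm K ≤ √B := by
  refine Real.sqrt_le_sqrt (ENNReal.toReal_le_of_le_ofReal hB ?_)
  rw [Measure.volume_eq_prod]
  exact (lintegral_prod_le _).trans h

lemma sqrt_one_div_mul_exp_mul_exp (a b c : ℝ) :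
    √(1 / a * Real.exp b * Real.exp c) = 1 / √a * Real.exp (b / 2) * Real.exp (c / 2) := by
  have hsqrt : ∀ d, √(Real.exp d) = Real.exp (d / 2) := fun d => by
    rw [Real.sqrt_eq_iff_mul_self_eq (Real.exp_pos _).le (Real.exp_pos _).le, ← Real.exp_add,
      add_halves]
  rw [Real.sqrt_mul' _ (Real.exp_pos _).le, Real.sqrt_mul' _ (Real.exp_pos _).le, hsqrt, hsqrt,
    one_div, Real.sqrt_inv, one_div]

noncomputable def K21 (s₁ s₂ u x y : ℝ) : ℝ :=
  Real.exp (x / 2) * (if s₂ < x ∧ s₁ < y then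
    Ai (x + y + u ^ 2) * Real.exp (-(x + y) * u - 2 * u ^ 3 / 3) else 0)

lemma lintegral_lintegral_K21_sq (s₁ s₂ u : ℝ) :
    ∫⁻ x, ∫⁻ y, ENNReal.ofReal (K21 s₁ s₂ u x y ^ 2) =
      ∫⁻ x in Set.Ioi s₂, ∫⁻ y in Set.Ioi s₁,
        ENNReal.ofReal (Real.exp x * Ai (x + y + u ^ 2) ^ 2 *
          Real.exp (-2 * (x + y) * u - 4 * u ^ 3 / 3)) := by
  rw [← lintegral_indicator measurableSet_Ioi]
  congr 1 with x
  by_cases hx : s₂ < x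
  · rw [Set.indicator_of_mem (Set.mem_Ioi.2 hx), ← lintegral_indicator measurableSet_Ioi]
    congr 1 with y
    by_cases hy : s₁ < y
    · rw [Set.indicator_of_mem (Set.mem_Ioi.2 hy), K21, if_pos ⟨hx, hy⟩, mul_pow, mul_pow,
        ← Real.exp_nat_mul, ← Real.exp_nat_mul]
      ring_nf
    · simp [K21, hy]
  · simp [K21, hx]

theorem K21_weighted_HS_bound_general (s₁ s₂ u : ℝ)
    (hu : 1 / 2 ≤ u) :
    (∫⁻ x in Set.Ioi s₂, ∫⁻ y in Set.Ioi s₁,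
        ENNReal.ofReal (Real.exp x * Ai (x + y + u ^ 2) ^ 2 *
          Real.exp (-2 * (x + y) * u - 4 * u ^ 3 / 3))) ≤
      ENNReal.ofReal (1 / (8 * u ^ 3) * Real.exp (-8 * u ^ 3 / 3) *
        Real.exp (-4 * (s₁ + s₂) * u + s₂)) ∧
    HSnorm (fun x y => Real.exp (x / 2) * (if s₂ < x ∧ s₁ < y then
        Ai (x + y + u ^ 2) * Real.exp (-(x + y) * u - 2 * u ^ 3 / 3) else 0)) ≤
      1 / Real.sqrt (8 * u ^ 3) * Real.exp (-4 * u ^ 3 / 3) *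
        Real.exp (-2 * (s₁ + s₂) * u + s₂ / 2) := by
  have hbound := lintegral_exp_mul_Ai_sq_mul_exp_le s₁ s₂ hu
  refine ⟨hbound, ?_⟩
  calc HSnorm (K21 s₁ s₂ u)
      ≤ √(1 / (8 * u ^ 3) * Real.exp (-8 * u ^ 3 / 3) * Real.exp (-4 * (s₁ + s₂) * u + s₂)) :=
        HSnorm_le_sqrt_of_lintegral_le (by positivity)
          ((lintegral_lintegral_K21_sq s₁ s₂ u).trans_le hbound)
    _ = _ := by
        rw [sqrt_one_div_mul_exp_mul_exp]
        ring_nf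

/-- bound in the proof of Lemma 3.11: for `s₁, s₂ ≥ 0` and
`u ≥ 1/2`, `∫_{s₂}^∞∫_{s₁}^∞ e^x Ai(x+y+u²)² e^{-2(x+y)u − 4u³/3}
≤ (8u³)^{-1} e^{-8u³/3} e^{-4(s₁+s₂)u + s₂}`; i.e. the Hilbert–Schmidt norm of
`K̄_{2,1}(x,y) = e^{x/2} 1_{x>s₂}1_{y>s₁} Ai(x+y+u²) e^{-(x+y)u − 2u³/3}` is at most
`(8u³)^{-1/2} e^{-4u³/3} e^{-2(s₁+s₂)u + s₂/2}`. -/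
theorem K21_weighted_HS_bound (s₁ s₂ u : ℝ) (hs₁ : 0 ≤ s₁) (hs₂ : 0 ≤ s₂)
    (hu : 1 / 2 ≤ u) :
    (∫⁻ x in Set.Ioi s₂, ∫⁻ y in Set.Ioi s₁,
        ENNReal.ofReal (Real.exp x * Ai (x + y + u ^ 2) ^ 2 *
          Real.exp (-2 * (x + y) * u - 4 * u ^ 3 / 3))) ≤
      ENNReal.ofReal (1 / (8 * u ^ 3) * Real.exp (-8 * u ^ 3 / 3) *
        Real.exp (-4 * (s₁ + s₂) * u + s₂)) ∧
    HSnorm (fun x y => Real.exp (x / 2) * (if s₂ < x ∧ s₁ < y then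
        Ai (x + y + u ^ 2) * Real.exp (-(x + y) * u - 2 * u ^ 3 / 3) else 0)) ≤
      1 / Real.sqrt (8 * u ^ 3) * Real.exp (-4 * u ^ 3 / 3) *
        Real.exp (-2 * (s₁ + s₂) * u + s₂ / 2) :=
  K21_weighted_HS_bound_general s₁ s₂ u hu
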